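/- Let g ≥ 1 and let B be a symmetric complex g×g matrix whose imaginary part is positive definite, and let p, q ∈ ℂ^g. Then the function z ↦ Θ[p,q](z|B) is complex differentiable (holomorphic) at every point z ∈ ℂ^g. -/

import Mathlib

open scoped BigOperators
open Matrix Complex

/-- The term of the theta series with characteristic `[p,q]`, argument `z`
and period matrix `B`, indexed by `m ∈ ℤ^g`:
`exp(πi⟨B(m+p), m+p⟩ + 2πi⟨z+q, m+p⟩)`. -/
noncomputable def thetaTerm (g : ℕ) (B : Matrix (Fin g) (Fin g) ℂ)
    (p q z : Fin g → ℂ) (m : Fin g → ℤ) : ℂ :=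
  Complex.exp ((Real.pi : ℂ) * Complex.I *
      (B.mulVec ((fun j => (m j : ℂ)) + p) ⬝ᵥ ((fun j => (m j : ℂ)) + p)) +
    2 * (Real.pi : ℂ) * Complex.I * ((z + q) ⬝ᵥ ((fun j => (m j : ℂ)) + p)))

/-- The theta function `Θ[p,q](z|B)`. -/
noncomputable def Theta (g : ℕ) (B : Matrix (Fin g) (Fin g) ℂ)
    (p q z : Fin g → ℂ) : ℂ :=
  ∑' m : Fin g → ℤ, thetaTerm g B p q z m

/-- The imaginary part of `B` is positive definite as a real quadratic form. -/
def ImPosDef (g : ℕ) (B : Matrix (Fin g) (Fin g) ℂ) : Prop :=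
  ∀ v : Fin g → ℝ, v ≠ 0 →
    0 < (Matrix.of fun j k => (B j k).im).mulVec v ⬝ᵥ v

/-! Since `Im B` is positive definite, compactness of the unit sphere gives
`Im ⟨B n, n⟩ ≥ c |m|² - O(|m|)` for `n = m + p`. Hence, uniformly for `z` in a ball, the terms
of the series, even weighted by the factor `1 + ∑ |n_j|` that bounds their derivatives, are
dominated by a product of one-dimensional Gaussians `exp (-π (c m_j² - 2 S |m_j|))`, which is
summable over `ℤ^g`; differentiating the series termwise gives holomorphy. -/

open Finset

theorem exists_pos_mul_norm_sq_le {E : Type*} [NormedAddCommGroup E] [NormedSpace ℝ E]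
    [FiniteDimensional ℝ E] {Q : E → ℝ} (hQ : Continuous Q)
    (hQ_smul : ∀ (t : ℝ) (v : E), Q (t • v) = t ^ 2 * Q v) (hQ_pos : ∀ v, v ≠ 0 → 0 < Q v) :
    ∃ c > 0, ∀ v, c * ‖v‖ ^ 2 ≤ Q v := by
  rcases subsingleton_or_nontrivial E with hE | hE
  · refine ⟨1, one_pos, fun v => ?_⟩
    have hQ0 : Q 0 = 0 := by simpa using hQ_smul 0 0
    simp [Subsingleton.elim v 0, hQ0]
  obtain ⟨v₀, hv₀, hmin⟩ := (isCompact_sphere (0 : E) 1).exists_isMinOn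
    (NormedSpace.sphere_nonempty.2 zero_le_one) hQ.continuousOn
  have hv₀_ne : v₀ ≠ 0 := ne_zero_of_mem_unit_sphere ⟨v₀, hv₀⟩
  refine ⟨Q v₀, hQ_pos v₀ hv₀_ne, fun v => ?_⟩
  rcases eq_or_ne v 0 with rfl | hv
  · simpa using (hQ_smul 0 0).ge
  have hnorm : 0 < ‖v‖ := norm_pos_iff.2 hv
  have hmem : ‖v‖⁻¹ • v ∈ Metric.sphere (0 : E) 1 := by
    simp [norm_smul, hnorm.ne']
  have := hmin hmem
  rw [Set.mem_ofPred_eq, hQ_smul] at this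
  calc Q v₀ * ‖v‖ ^ 2 ≤ ‖v‖⁻¹ ^ 2 * Q v * ‖v‖ ^ 2 := by gcongr
    _ = Q v := by field_simp

theorem Matrix.exists_pos_mul_dotProduct_self_le {n : Type*} [Fintype n]
    (A : Matrix n n ℝ) (hA : ∀ v : n → ℝ, v ≠ 0 → 0 < A *ᵥ v ⬝ᵥ v) :
    ∃ c > 0, ∀ v : n → ℝ, c * (v ⬝ᵥ v) ≤ A *ᵥ v ⬝ᵥ v := by
  obtain ⟨c, hc, hcQ⟩ := exists_pos_mul_norm_sq_le
    (E := EuclideanSpace ℝ n) (Q := fun v => A *ᵥ v.ofLp ⬝ᵥ v.ofLp)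
    (by fun_prop) (fun t v => by simp [Matrix.mulVec_smul]; ring)
    (fun v hv => hA _ (by simpa using hv))
  refine ⟨c, hc, fun v => ?_⟩
  simpa [EuclideanSpace.norm_sq_eq, dotProduct, ← sq] using hcQ (WithLp.toLp 2 v)

theorem Matrix.norm_dotProduct_le {R n : Type*} [SeminormedRing R] [Fintype n] (u v : n → R) :
    ‖u ⬝ᵥ v‖ ≤ ‖u‖ * ∑ j, ‖v j‖ :=
  calc ‖u ⬝ᵥ v‖ ≤ ∑ j, ‖u j‖ * ‖v j‖ :=
        (norm_sum_le _ _).trans (sum_le_sum fun j _ => norm_mul_le _ _)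
    _ ≤ ∑ j, ‖u‖ * ‖v j‖ := by gcongr with j; exact norm_le_pi_norm u j
    _ = ‖u‖ * ∑ j, ‖v j‖ := (mul_sum _ _ _).symm

theorem Summable.prod_fin_pi_of_nonneg {ι : Type*} {f : ι → ℝ} (hf : Summable f) (hf₀ : 0 ≤ f) :
    ∀ n : ℕ, Summable fun x : Fin n → ι => ∏ j, f (x j)
  | 0 => .of_finite
  | n + 1 => by
    have hprod := hf.mul_of_nonneg (hf.prod_fin_pi_of_nonneg hf₀ n) hf₀
      fun x => prod_nonneg fun j _ => hf₀ (x j)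
    refine (Fin.consEquiv fun _ => ι).summable_iff.mp ?_
    simpa [Function.comp_def, Fin.consEquiv, Fin.prod_univ_succ] using hprod

open Real in
theorem norm_thetaTerm (g : ℕ) (B : Matrix (Fin g) (Fin g) ℂ) (p q z : Fin g → ℂ)
    (m : Fin g → ℤ) :
    ‖thetaTerm g B p q z m‖ =
      rexp (-π * ((B *ᵥ ((fun j => (m j : ℂ)) + p) ⬝ᵥ ((fun j => (m j : ℂ)) + p)).im +
        2 * ((z + q) ⬝ᵥ ((fun j => (m j : ℂ)) + p)).im)) := by
  rw [thetaTerm, Complex.norm_exp]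
  congr 1
  simp [Complex.mul_re]
  ring

theorem Matrix.im_mulVec_ofReal_dotProduct_ofReal {n : Type*} [Fintype n]
    (B : Matrix n n ℂ) (x : n → ℝ) :
    (B *ᵥ (fun j => (x j : ℂ)) ⬝ᵥ (fun j => (x j : ℂ))).im = B.map Complex.im *ᵥ x ⬝ᵥ x := by
  simp [dotProduct, Matrix.mulVec, Complex.im_sum, Finset.sum_mul]

theorem Matrix.im_mulVec_add_dotProduct_add_ge {n : Type*} [Fintype n]
    (B : Matrix n n ℂ) (x : n → ℝ) (p : n → ℂ) :
    B.map Complex.im *ᵥ x ⬝ᵥ x - ‖p ᵥ* B + B *ᵥ p‖ * ∑ j, |x j| - ‖B *ᵥ p ⬝ᵥ p‖ ≤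
      (B *ᵥ ((fun j => (x j : ℂ)) + p) ⬝ᵥ ((fun j => (x j : ℂ)) + p)).im := by
  set x' : n → ℂ := fun j => (x j : ℂ)
  have hexpand : B *ᵥ (x' + p) ⬝ᵥ (x' + p) =
      B *ᵥ x' ⬝ᵥ x' + (p ᵥ* B + B *ᵥ p) ⬝ᵥ x' + B *ᵥ p ⬝ᵥ p := by
    simp only [Matrix.mulVec_add, add_dotProduct, dotProduct_add, ← Matrix.dotProduct_mulVec]
    rw [dotProduct_comm (B *ᵥ x') p]
    ring
  have hcross : ‖(p ᵥ* B + B *ᵥ p) ⬝ᵥ x'‖ ≤ ‖p ᵥ* B + B *ᵥ p‖ * ∑ j, |x j| := by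
    simpa [x'] using Matrix.norm_dotProduct_le (p ᵥ* B + B *ᵥ p) x'
  rw [hexpand, Complex.add_im, Complex.add_im, Matrix.im_mulVec_ofReal_dotProduct_ofReal]
  linarith [neg_abs_le ((p ᵥ* B + B *ᵥ p) ⬝ᵥ x').im, Complex.abs_im_le_norm
    ((p ᵥ* B + B *ᵥ p) ⬝ᵥ x'), neg_abs_le (B *ᵥ p ⬝ᵥ p).im, Complex.abs_im_le_norm (B *ᵥ p ⬝ᵥ p)]

theorem sum_norm_ofReal_add_le {n : Type*} [Fintype n] (x : n → ℝ) (p : n → ℂ) :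
    ∑ j, ‖(x j : ℂ) + p j‖ ≤ ∑ j, |x j| + ∑ j, ‖p j‖ := by
  rw [← sum_add_distrib]
  gcongr with j
  simpa using norm_add_le (x j : ℂ) (p j)

theorem one_add_sum_norm_ofReal_add_le {n : Type*} [Fintype n] (x : n → ℝ) (p : n → ℂ) :
    1 + ∑ j, ‖(x j : ℂ) + p j‖ ≤ (1 + ∑ j, ‖p j‖) * Real.exp (∑ j, |x j|) := by
  have hx : 0 ≤ ∑ j, |x j| := sum_nonneg fun j _ => abs_nonneg (x j)
  have hp : 0 ≤ ∑ j, ‖p j‖ := sum_nonneg fun j _ => norm_nonneg (p j)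
  nlinarith [sum_norm_ofReal_add_le x p, Real.add_one_le_exp (∑ j, |x j|)]

theorem Matrix.im_dotProduct_ofReal_add_ge {n : Type*} [Fintype n] (u : n → ℂ) (x : n → ℝ)
    (p : n → ℂ) :
    -(‖u‖ * (∑ j, |x j| + ∑ j, ‖p j‖)) ≤ (u ⬝ᵥ ((fun j => (x j : ℂ)) + p)).im := by
  have h := (Matrix.norm_dotProduct_le u ((fun j => (x j : ℂ)) + p)).trans
    (mul_le_mul_of_nonneg_left (sum_norm_ofReal_add_le x p) (norm_nonneg u))
  linarith [neg_abs_le (u ⬝ᵥ ((fun j => (x j : ℂ)) + p)).im,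
    Complex.abs_im_le_norm (u ⬝ᵥ ((fun j => (x j : ℂ)) + p))]

open Real in
theorem exists_summable_thetaTerm_majorant {g : ℕ} {B : Matrix (Fin g) (Fin g) ℂ}
    (hpos : ImPosDef g B) (p q : Fin g → ℂ) (R : ℝ) :
    ∃ u : (Fin g → ℤ) → ℝ, Summable u ∧ ∀ z m, ‖z + q‖ ≤ R →
      (1 + ∑ j, ‖(m j : ℂ) + p j‖) * ‖thetaTerm g B p q z m‖ ≤ u m := by
  obtain ⟨c, hc, hcoer⟩ := (B.map Complex.im).exists_pos_mul_dotProduct_self_le hpos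
  set P := ∑ j, ‖p j‖
  set K := ‖p ᵥ* B + B *ᵥ p‖
  -- the summand `π⁻¹` absorbs the weight, which is at most `(1 + P) * exp (∑ |m_j|)`
  set S := (K + 2 * R + π⁻¹) / 2
  set D := π * (‖B *ᵥ p ⬝ᵥ p‖ + 2 * R * P)
  refine ⟨fun m => (1 + P) * rexp D * ∏ j, rexp (-π * (c * (m j : ℝ) ^ 2 - 2 * S * |(m j : ℝ)|)),
    ?_, fun z m hz => ?_⟩
  · refine Summable.mul_left _ (Summable.prod_fin_pi_of_nonneg
      (f := fun n : ℤ => rexp (-π * (c * (n : ℝ) ^ 2 - 2 * S * |(n : ℝ)|))) ?_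
      (fun _ => (exp_pos _).le) g)
    simpa using summable_pow_mul_jacobiTheta₂_term_bound S hc 0
  set x : Fin g → ℝ := fun j => (m j : ℝ)
  set X₁ := ∑ j, |x j|
  have hcast : (fun j => (m j : ℂ)) = fun j => (x j : ℂ) := by simp [x]
  have hweight : 1 + ∑ j, ‖(m j : ℂ) + p j‖ ≤ (1 + P) * rexp X₁ := by
    simpa [x] using one_add_sum_norm_ofReal_add_le x p
  have hquad : B.map Complex.im *ᵥ x ⬝ᵥ x - K * X₁ - ‖B *ᵥ p ⬝ᵥ p‖ ≤
      (B *ᵥ ((fun j => (x j : ℂ)) + p) ⬝ᵥ ((fun j => (x j : ℂ)) + p)).im :=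
    B.im_mulVec_add_dotProduct_add_ge x p
  have hlin : -(R * (X₁ + P)) ≤ ((z + q) ⬝ᵥ ((fun j => (x j : ℂ)) + p)).im :=
    le_trans (by gcongr) (Matrix.im_dotProduct_ofReal_add_ge (z + q) x p)
  have hprod : ∏ j, rexp (-π * (c * x j ^ 2 - 2 * S * |x j|)) =
      rexp (-π * (c * (x ⬝ᵥ x) - 2 * S * X₁)) := by
    rw [← Real.exp_sum]
    simp only [dotProduct, ← sq, X₁, mul_sum, ← sum_sub_distrib]
  have hexp : X₁ + -π * ((B *ᵥ ((fun j => (x j : ℂ)) + p) ⬝ᵥ ((fun j => (x j : ℂ)) + p)).im +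
      2 * ((z + q) ⬝ᵥ ((fun j => (x j : ℂ)) + p)).im) ≤ D + -π * (c * (x ⬝ᵥ x) - 2 * S * X₁) := by
    have hS : 2 * S * π * X₁ = (K * π + 2 * R * π + 1) * X₁ := by
      simp only [S]
      field_simp
    have hD : D = π * (‖B *ᵥ p ⬝ᵥ p‖ + 2 * R * P) := rfl
    linarith [mul_le_mul_of_nonneg_left hquad pi_pos.le, mul_le_mul_of_nonneg_left hlin pi_pos.le,
      mul_le_mul_of_nonneg_left (hcoer x) pi_pos.le]
  calc (1 + ∑ j, ‖(m j : ℂ) + p j‖) * ‖thetaTerm g B p q z m‖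
      ≤ (1 + P) * rexp X₁ * ‖thetaTerm g B p q z m‖ := by gcongr
    _ ≤ (1 + P) * rexp D * ∏ j, rexp (-π * (c * x j ^ 2 - 2 * S * |x j|)) := by
      rw [norm_thetaTerm, hprod, hcast, mul_assoc, mul_assoc, ← Real.exp_add, ← Real.exp_add]
      gcongr

section DotProductCLM

variable {𝕜 ι : Type*} [NontriviallyNormedField 𝕜] [CompleteSpace 𝕜] [Fintype ι]

noncomputable def Matrix.dotProductRightCLM (v : ι → 𝕜) : (ι → 𝕜) →L[𝕜] 𝕜 :=
  LinearMap.toContinuousLinearMap ((dotProductBilin 𝕜 𝕜).flip v)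

@[simp]
theorem Matrix.dotProductRightCLM_apply (v u : ι → 𝕜) : dotProductRightCLM v u = u ⬝ᵥ v := rfl

theorem Matrix.norm_dotProductRightCLM_le (v : ι → 𝕜) : ‖dotProductRightCLM v‖ ≤ ∑ j, ‖v j‖ :=
  ContinuousLinearMap.opNorm_le_bound _ (sum_nonneg fun _ _ => norm_nonneg _) fun u => by
    simpa [mul_comm] using Matrix.norm_dotProduct_le u v

end DotProductCLM

open Real in
theorem hasFDerivAt_thetaTerm (g : ℕ) (B : Matrix (Fin g) (Fin g) ℂ) (p q : Fin g → ℂ)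
    (m : Fin g → ℤ) (w : Fin g → ℂ) :
    HasFDerivAt (fun z => thetaTerm g B p q z m) ((2 * π * Complex.I * thetaTerm g B p q w m) •
      dotProductRightCLM ((fun j => (m j : ℂ)) + p)) w := by
  set n : Fin g → ℂ := (fun j => (m j : ℂ)) + p
  set a := π * Complex.I * (B *ᵥ n ⬝ᵥ n) + 2 * π * Complex.I * (q ⬝ᵥ n)
  have hterm : (fun z => thetaTerm g B p q z m) =
      fun z => Complex.exp (a + 2 * π * Complex.I * dotProductRightCLM n z) := by
    funext z
    simp only [thetaTerm, dotProductRightCLM_apply, add_dotProduct, a, n]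
    ring_nf
  rw [hterm, congrFun hterm w, mul_comm (2 * π * Complex.I : ℂ), ← smul_smul]
  exact ((dotProductRightCLM n).hasFDerivAt.const_mul (2 * π * Complex.I)).const_add a |>.cexp

open Real in
theorem norm_thetaTerm_fderiv_le (g : ℕ) (B : Matrix (Fin g) (Fin g) ℂ) (p q : Fin g → ℂ)
    (m : Fin g → ℤ) (w : Fin g → ℂ) :
    ‖(2 * π * Complex.I * thetaTerm g B p q w m) • dotProductRightCLM ((fun j => (m j : ℂ)) + p)‖ ≤
      2 * π * ((1 + ∑ j, ‖(m j : ℂ) + p j‖) * ‖thetaTerm g B p q w m‖) := by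
  rw [norm_smul, norm_mul, norm_mul, norm_mul, Complex.norm_I, Complex.norm_real,
    norm_of_nonneg pi_pos.le, Complex.norm_two, mul_one, mul_assoc, mul_comm ‖thetaTerm _ _ _ _ _ _‖]
  gcongr
  have hL := norm_dotProductRightCLM_le ((fun j => (m j : ℂ)) + p)
  simp only [Pi.add_apply] at hL
  linarith

theorem theta_holomorphic_general
    (g : ℕ) (B : Matrix (Fin g) (Fin g) ℂ)
    (hpos : ImPosDef g B) (p q : Fin g → ℂ) :
    ∀ z : Fin g → ℂ, DifferentiableAt ℂ (fun w => Theta g B p q w) z := by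
  intro z₀
  obtain ⟨u, hu, hu_bound⟩ := exists_summable_thetaTerm_majorant hpos p q (‖z₀ + q‖ + 1)
  have hball : ∀ z ∈ Metric.ball z₀ 1, ‖z + q‖ ≤ ‖z₀ + q‖ + 1 := fun z hz => by
    rw [show z + q = (z - z₀) + (z₀ + q) by abel]
    linarith [norm_add_le (z - z₀) (z₀ + q), mem_ball_iff_norm.1 hz]
  have hz₀ := Metric.mem_ball_self (x := z₀) one_pos
  have hsum : Summable fun m => thetaTerm g B p q z₀ m := .of_norm_bounded hu fun m =>
    (le_mul_of_one_le_left (norm_nonneg _) (le_add_of_nonneg_right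
      (sum_nonneg fun _ _ => norm_nonneg _))).trans (hu_bound z₀ m (hball z₀ hz₀))
  refine (hasFDerivAt_tsum_of_isPreconnected (hu.mul_left (2 * Real.pi)) Metric.isOpen_ball
    (convex_ball z₀ 1).isPreconnected (fun m z _ => hasFDerivAt_thetaTerm g B p q m z)
    (fun m z hz => ?_) hz₀ hsum hz₀).differentiableAt
  exact (norm_thetaTerm_fderiv_le g B p q m z).trans
    (mul_le_mul_of_nonneg_left (hu_bound z m (hball z hz)) (by positivity))

/-- `z ↦ Θ[p,q](z|B)` is holomorphic at every `z ∈ ℂ^g`. -/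
theorem theta_holomorphic
    (g : ℕ) (hg : 1 ≤ g) (B : Matrix (Fin g) (Fin g) ℂ)
    (hB : B.IsSymm) (hpos : ImPosDef g B) (p q : Fin g → ℂ) :
    ∀ z : Fin g → ℂ, DifferentiableAt ℂ (fun w => Theta g B p q w) z :=
  theta_holomorphic_general g B hpos p q
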